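/- Let 𝐚 = a₁e₁ + a₂e₂ + a₃e₃ be a nonzero vector in Cl(3,0) and write ‖𝐚‖ = √(a₁² + a₂² + a₃²). Then for any integers c₁, c₂, exp( (1/2)·log(‖𝐚‖²) - π(1/2 + 2c₂)·(𝐚/‖𝐚‖)·I + π(1/2 + 2c₁)·I ) = 𝐚. -/

import Mathlib

open Real CliffordAlgebra

noncomputable section

/-- The quadratic form of signature (3,0): `Q(x) = x₁² + x₂² + x₃²`. -/
def Q30 : QuadraticForm ℝ (Fin 3 → ℝ) := QuadraticMap.weightedSumSquares ℝ ![1, 1, 1]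

/-- The real Clifford algebra Cl(3,0). -/
abbrev Cl30 := CliffordAlgebra Q30

/-- The canonical (module) topology on the finite-dimensional real algebra Cl(3,0). -/
instance : TopologicalSpace Cl30 := moduleTopology ℝ Cl30

/-- The orthonormal generators `e₁, e₂, e₃` (indexed here by `0, 1, 2`). -/
def e (i : Fin 3) : Cl30 := ι Q30 (Pi.single i 1)

/-- The pseudoscalar `I = e₁e₂e₃`. -/
def I3 : Cl30 := e 0 * e 1 * e 2

/-- The exponential `exp M = ∑ₖ Mᵏ/k!` in Cl(3,0). -/
def expCl (M : Cl30) : Cl30 := ∑' n : ℕ, (n.factorial : ℝ)⁻¹ • M ^ n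

/-- `atan2 y x` is the argument in `(-π, π]` of the complex number `x + iy`. -/
def atan2 (y x : ℝ) : ℝ := Complex.arg ⟨x, y⟩

instance : IsModuleTopology ℝ Cl30 := ⟨rfl⟩
instance : ContinuousAdd Cl30 := IsModuleTopology.toContinuousAdd ℝ Cl30
instance : T2Space Cl30 := by
  apply T2Space.of_injective_continuous
    (f := fun (x : Cl30) (φ : Module.Dual ℝ Cl30) => φ x)
  · intro x y h
    rw [← sub_eq_zero, ← Module.forall_dual_apply_eq_zero_iff ℝ]
    intro φ
    rw [map_sub, sub_eq_zero]
    exact congrFun h φ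
  · exact continuous_pi fun φ => IsModuleTopology.continuous_of_linearMap φ

lemma e_mul_self (i : Fin 3) : e i * e i = 1 := by
  rw [e, ι_sq_scalar]
  have h : Q30 (Pi.single i 1) = 1 := by
    fin_cases i <;>
      simp [Q30, QuadraticMap.weightedSumSquares_apply, Fin.sum_univ_three, Pi.single_apply]
  rw [h, map_one]

lemma e_anticomm {i j : Fin 3} (h : i ≠ j) : e i * e j = -(e j * e i) := by
  have h2 : e i * e j + e j * e i = 0 := by
    rw [e, e, ι_mul_ι_add_swap]
    have : QuadraticMap.polar Q30 (Pi.single i 1) (Pi.single j 1) = 0 := by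
      fin_cases i <;> fin_cases j <;> first
        | (exact absurd rfl h)
        | (simp [QuadraticMap.polar, Q30, QuadraticMap.weightedSumSquares_apply,
            Fin.sum_univ_three, Pi.single_apply]; try ring)
    rw [this, map_zero]
  exact eq_neg_of_add_eq_zero_left h2

lemma e_mul_e_mul (i : Fin 3) (x : Cl30) : e i * (e i * x) = x := by
  rw [← mul_assoc, e_mul_self, one_mul]

lemma e10 : e 1 * e 0 = -(e 0 * e 1) := e_anticomm (by decide)
lemma e20 : e 2 * e 0 = -(e 0 * e 2) := e_anticomm (by decide)
lemma e21 : e 2 * e 1 = -(e 1 * e 2) := e_anticomm (by decide)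
lemma e10' (x : Cl30) : e 1 * (e 0 * x) = -(e 0 * (e 1 * x)) := by
  rw [← mul_assoc, e10, neg_mul, mul_assoc]
lemma e20' (x : Cl30) : e 2 * (e 0 * x) = -(e 0 * (e 2 * x)) := by
  rw [← mul_assoc, e20, neg_mul, mul_assoc]
lemma e21' (x : Cl30) : e 2 * (e 1 * x) = -(e 1 * (e 2 * x)) := by
  rw [← mul_assoc, e21, neg_mul, mul_assoc]

lemma I3_mul_I3 : I3 * I3 = -1 := by
  simp [I3, mul_assoc, e10, e20, e21, e10', e20', e21', e_mul_e_mul, e_mul_self]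

lemma e_mul_I3_comm (i : Fin 3) : e i * I3 = I3 * e i := by
  fin_cases i <;>
    simp [I3, mul_assoc, e10, e20, e21, e10', e20', e21', e_mul_e_mul, e_mul_self]

set_option synthInstance.maxHeartbeats 1000000 in
/-- exponential of the logarithm of a nonzero vector in Cl(3,0). -/
theorem exp_log_vector_Cl30
    (a1 a2 a3 n : ℝ) (c1 c2 : ℤ) (va : Cl30)
    (hva : va = a1 • e 0 + a2 • e 1 + a3 • e 2)
    (hn : n = Real.sqrt (a1 ^ 2 + a2 ^ 2 + a3 ^ 2))
    (hnpos : 0 < n) :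
    expCl (algebraMap ℝ Cl30 ((1 / 2) * Real.log (n ^ 2)) -
      (π * (1 / 2 + 2 * c2) / n) • (va * I3) + (π * (1 / 2 + 2 * c1)) • I3) = va := by
  have hne : n ≠ 0 := ne_of_gt hnpos
  have hn2 : a1 ^ 2 + a2 ^ 2 + a3 ^ 2 = n ^ 2 := by
    rw [hn, sq_sqrt (by positivity)]
  -- va * va = n^2
  have hm : (![a1,a2,a3] : Fin 3 → ℝ)
      = a1 • (Pi.single 0 1 : Fin 3 → ℝ) + a2 • (Pi.single 1 1 : Fin 3 → ℝ) + a3 • (Pi.single 2 1 : Fin 3 → ℝ) := by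
    funext j; fin_cases j <;> simp
  have hva' : va = ι Q30 ![a1,a2,a3] := by
    rw [hva, hm]
    simp [e, map_add, map_smul]
  have hva2 : va * va = algebraMap ℝ Cl30 (n ^ 2) := by
    rw [hva', ι_sq_scalar]
    congr 1
    rw [← hn2]
    simp [Q30, QuadraticMap.weightedSumSquares_apply, Fin.sum_univ_three]
    ring
  have hcomm : va * I3 = I3 * va := by
    rw [hva]
    simp only [add_mul, mul_add, smul_mul_assoc, mul_smul_comm, e_mul_I3_comm]
  -- commuting generators u, w
  obtain ⟨u, hu⟩ : ∃ x : Cl30, x = n⁻¹ • (va * I3) := ⟨_, rfl⟩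
  obtain ⟨w, hw⟩ : ∃ x : Cl30, x = -(n⁻¹ • va) := ⟨_, rfl⟩
  have hvaI3 : va * I3 = n • u := by
    rw [hu, smul_smul, mul_inv_cancel₀ hne, one_smul]
  have hvaw : va = -(n • w) := by
    rw [hw, smul_neg, smul_smul, mul_inv_cancel₀ hne, one_smul, neg_neg]
  have hone : n⁻¹ * (n⁻¹ * n ^ 2) = 1 := by field_simp
  have hsq : (va * I3) * (va * I3) = -((n ^ 2) • (1 : Cl30)) := by
    calc (va * I3) * (va * I3) = (va * va) * (I3 * I3) := by
          rw [mul_assoc, ← mul_assoc I3 va I3, ← hcomm, mul_assoc, ← mul_assoc]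
    _ = -((n ^ 2) • (1 : Cl30)) := by
          rw [hva2, I3_mul_I3, Algebra.algebraMap_eq_smul_one, mul_neg, mul_one]
  have hu2 : u * u = -1 := by
    rw [hu, smul_mul_assoc, mul_smul_comm, hsq]
    match_scalars <;> (field_simp; try ring)
  have hw2 : w * w = 1 := by
    rw [hw, neg_mul_neg, smul_mul_assoc, mul_smul_comm, hva2, Algebra.algebraMap_eq_smul_one]
    match_scalars <;> (field_simp; try ring)
  have hkey : (va * I3) * va = (n ^ 2) • I3 := by
    rw [mul_assoc, ← hcomm, ← mul_assoc, hva2, Algebra.algebraMap_eq_smul_one,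
      smul_mul_assoc, one_mul]
  have hkey2 : va * (va * I3) = (n ^ 2) • I3 := by
    rw [← mul_assoc, hva2, Algebra.algebraMap_eq_smul_one, smul_mul_assoc, one_mul]
  have huw : u * w = -I3 := by
    rw [hu, hw, mul_neg, smul_mul_assoc, mul_smul_comm, hkey]
    match_scalars <;> (field_simp; try ring)
  have hwu : w * u = -I3 := by
    rw [hu, hw, neg_mul, smul_mul_assoc, mul_smul_comm, hkey2]
    match_scalars <;> (field_simp; try ring)
  have hcuw : w * u = u * w := by rw [hwu, huw]
  have hI3 : I3 = -(u * w) := by rw [huw, neg_neg]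
  have t4 : u * (u * w) = -w := by rw [← mul_assoc, hu2, neg_one_mul]
  have t5 : (u * w) * w = u := by rw [mul_assoc, hw2, mul_one]
  have t8 : w * (u * w) = u := by rw [← mul_assoc, hcuw, mul_assoc, hw2, mul_one]
  have t6 : (u * w) * u = -w := by rw [mul_assoc, hcuw, t4]
  have t7 : (u * w) * (u * w) = -1 := by rw [huw, neg_mul_neg, I3_mul_I3]
  -- the element whose exponential we compute
  obtain ⟨θ, hθ⟩ : ∃ x : ℝ, x = -(π * (1 / 2 + 2 * (c2 : ℝ))) := ⟨_, rfl⟩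
  obtain ⟨γ, hγ⟩ : ∃ x : ℝ, x = π * (1 / 2 + 2 * (c1 : ℝ)) := ⟨_, rfl⟩
  obtain ⟨al, hal⟩ : ∃ x : ℝ, x = (1 / 2) * Real.log (n ^ 2) := ⟨_, rfl⟩
  obtain ⟨A, hA⟩ : ∃ x : Cl30, x = al • 1 + θ • u + γ • I3 := ⟨_, rfl⟩
  have hAeq : algebraMap ℝ Cl30 ((1 / 2) * Real.log (n ^ 2))
      - (π * (1 / 2 + 2 * (c2 : ℝ)) / n) • (va * I3)
      + (π * (1 / 2 + 2 * (c1 : ℝ))) • I3 = A := by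
    rw [hA, hal, hθ, hγ, hvaI3, smul_smul, div_mul_cancel₀ _ hne,
      Algebra.algebraMap_eq_smul_one, neg_smul, sub_eq_add_neg]
  rw [hAeq]
  -- idempotent-like decomposition
  obtain ⟨p, hp⟩ : ∃ x : Cl30, x = (2⁻¹ : ℝ) • (1 + w) := ⟨_, rfl⟩
  obtain ⟨q, hq⟩ : ∃ x : Cl30, x = (2⁻¹ : ℝ) • (1 - w) := ⟨_, rfl⟩
  have hMp : A * p = al • p + (θ - γ) • (u * p) := by
    rw [hA, hp, hI3]
    simp only [mul_add, add_mul, smul_mul_assoc, mul_smul_comm, mul_one, one_mul, mul_neg,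
      neg_mul, smul_neg, t5, t4, t6, t7, t8, hu2, hw2, smul_add, smul_smul, sub_smul, neg_smul,
      smul_sub]
    module
  have hMup : A * (u * p) = (γ - θ) • p + al • (u * p) := by
    rw [hA, hp, hI3]
    simp only [mul_add, add_mul, smul_mul_assoc, mul_smul_comm, mul_one, one_mul, mul_neg,
      neg_mul, smul_neg, t5, t4, t6, t7, t8, hu2, hw2, smul_add, smul_smul, sub_smul, neg_smul,
      smul_sub, mul_assoc]
    module
  have hMq : A * q = al • q + (θ + γ) • (u * q) := by
    rw [hA, hq, hI3]
    simp only [mul_add, add_mul, mul_sub, sub_mul, smul_mul_assoc, mul_smul_comm, mul_one,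
      one_mul, mul_neg, neg_mul, smul_neg, t5, t4, t6, t7, t8, hu2, hw2, smul_add, smul_smul,
      add_smul, neg_smul, smul_sub]
    module
  have hMuq : A * (u * q) = -(θ + γ) • q + al • (u * q) := by
    rw [hA, hq, hI3]
    simp only [mul_add, add_mul, mul_sub, sub_mul, smul_mul_assoc, mul_smul_comm, mul_one,
      one_mul, mul_neg, neg_mul, smul_neg, t5, t4, t6, t7, t8, hu2, hw2, smul_add, smul_smul,
      add_smul, neg_smul, smul_sub, mul_assoc]
    module
  -- complex coefficients
  obtain ⟨z1, hz1⟩ : ∃ x : ℂ, x = ⟨al, θ - γ⟩ := ⟨_, rfl⟩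
  obtain ⟨z2, hz2⟩ : ∃ x : ℂ, x = ⟨al, θ + γ⟩ := ⟨_, rfl⟩
  have hz1re : z1.re = al := by rw [hz1]
  have hz1im : z1.im = θ - γ := by rw [hz1]
  have hz2re : z2.re = al := by rw [hz2]
  have hz2im : z2.im = θ + γ := by rw [hz2]
  have hpow : ∀ k : ℕ, A ^ k = (z1 ^ k).re • p + (z1 ^ k).im • (u * p)
      + (z2 ^ k).re • q + (z2 ^ k).im • (u * q) := by
    intro k
    induction k with
    | zero =>
      simp only [pow_zero, Complex.one_re, Complex.one_im, one_smul, zero_smul, add_zero]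
      rw [hp, hq]; module
    | succ k ih =>
      have e1 : (z1 ^ (k + 1)).re = al * (z1 ^ k).re - (θ - γ) * (z1 ^ k).im := by
        rw [pow_succ', Complex.mul_re, hz1re, hz1im]
      have e2 : (z1 ^ (k + 1)).im = al * (z1 ^ k).im + (θ - γ) * (z1 ^ k).re := by
        rw [pow_succ', Complex.mul_im, hz1re, hz1im]
      have e3 : (z2 ^ (k + 1)).re = al * (z2 ^ k).re - (θ + γ) * (z2 ^ k).im := by
        rw [pow_succ', Complex.mul_re, hz2re, hz2im]
      have e4 : (z2 ^ (k + 1)).im = al * (z2 ^ k).im + (θ + γ) * (z2 ^ k).re := by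
        rw [pow_succ', Complex.mul_im, hz2re, hz2im]
      rw [pow_succ' A, ih, mul_add, mul_add, mul_add, mul_smul_comm, mul_smul_comm,
        mul_smul_comm, mul_smul_comm, hMp, hMup, hMq, hMuq, e1, e2, e3, e4]
      match_scalars <;> ring
  -- summability of the complex exponential series
  have hs1 : Summable fun k : ℕ => (k.factorial : ℝ)⁻¹ • z1 ^ k :=
    NormedSpace.expSeries_summable' (𝕂 := ℝ) z1
  have hs2 : Summable fun k : ℕ => (k.factorial : ℝ)⁻¹ • z2 ^ k :=
    NormedSpace.expSeries_summable' (𝕂 := ℝ) z2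
  have hexpz : ∀ z : ℂ, ∑' k : ℕ, (k.factorial : ℝ)⁻¹ • z ^ k = Complex.exp z := by
    intro z
    rw [Complex.exp_eq_exp_ℂ, NormedSpace.exp_eq_tsum ℝ]
  have hre1 : Summable fun k : ℕ => (k.factorial : ℝ)⁻¹ * (z1 ^ k).re := by
    simpa [Function.comp_def, Complex.smul_re, smul_eq_mul]
      using hs1.map Complex.reCLM Complex.reCLM.continuous
  have him1 : Summable fun k : ℕ => (k.factorial : ℝ)⁻¹ * (z1 ^ k).im := by
    simpa [Function.comp_def, Complex.smul_im, smul_eq_mul]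
      using hs1.map Complex.imCLM Complex.imCLM.continuous
  have hre2 : Summable fun k : ℕ => (k.factorial : ℝ)⁻¹ * (z2 ^ k).re := by
    simpa [Function.comp_def, Complex.smul_re, smul_eq_mul]
      using hs2.map Complex.reCLM Complex.reCLM.continuous
  have him2 : Summable fun k : ℕ => (k.factorial : ℝ)⁻¹ * (z2 ^ k).im := by
    simpa [Function.comp_def, Complex.smul_im, smul_eq_mul]
      using hs2.map Complex.imCLM Complex.imCLM.continuous
  have ht1re : ∑' k : ℕ, (k.factorial : ℝ)⁻¹ * (z1 ^ k).re = (Complex.exp z1).re := by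
    have h := Complex.reCLM.map_tsum hs1
    simp only [Complex.reCLM_apply, Complex.smul_re, smul_eq_mul] at h
    rw [← h, hexpz]
  have ht1im : ∑' k : ℕ, (k.factorial : ℝ)⁻¹ * (z1 ^ k).im = (Complex.exp z1).im := by
    have h := Complex.imCLM.map_tsum hs1
    simp only [Complex.imCLM_apply, Complex.smul_im, smul_eq_mul] at h
    rw [← h, hexpz]
  have ht2re : ∑' k : ℕ, (k.factorial : ℝ)⁻¹ * (z2 ^ k).re = (Complex.exp z2).re := by
    have h := Complex.reCLM.map_tsum hs2
    simp only [Complex.reCLM_apply, Complex.smul_re, smul_eq_mul] at h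
    rw [← h, hexpz]
  have ht2im : ∑' k : ℕ, (k.factorial : ℝ)⁻¹ * (z2 ^ k).im = (Complex.exp z2).im := by
    have h := Complex.imCLM.map_tsum hs2
    simp only [Complex.imCLM_apply, Complex.smul_im, smul_eq_mul] at h
    rw [← h, hexpz]
  -- compute the exponential
  have S1 := hre1.smul_const p
  have S2 := him1.smul_const (u * p)
  have S3 := hre2.smul_const q
  have S4 := him2.smul_const (u * q)
  have hexpA : expCl A = (Complex.exp z1).re • p + (Complex.exp z1).im • (u * p)
      + (Complex.exp z2).re • q + (Complex.exp z2).im • (u * q) := by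
    rw [expCl]
    have hterm : ∀ k : ℕ, (k.factorial : ℝ)⁻¹ • A ^ k
        = ((k.factorial : ℝ)⁻¹ * (z1 ^ k).re) • p + ((k.factorial : ℝ)⁻¹ * (z1 ^ k).im) • (u * p)
        + ((k.factorial : ℝ)⁻¹ * (z2 ^ k).re) • q
        + ((k.factorial : ℝ)⁻¹ * (z2 ^ k).im) • (u * q) := by
      intro k
      rw [hpow k]
      simp only [smul_add, smul_smul]
    rw [tsum_congr hterm, Summable.tsum_add ((S1.add S2).add S3) S4, Summable.tsum_add (S1.add S2) S3,
      Summable.tsum_add S1 S2, Summable.tsum_smul_const hre1, Summable.tsum_smul_const him1, Summable.tsum_smul_const hre2,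
      Summable.tsum_smul_const him2, ht1re, ht1im, ht2re, ht2im]
  -- evaluate the complex exponentials
  have hexpal : Real.exp al = n := by
    rw [hal, show (1 / 2 : ℝ) * Real.log (n ^ 2) = Real.log n by
      rw [Real.log_pow]; push_cast; ring]
    exact Real.exp_log hnpos
  have hd1 : θ - γ = -π + (-(c1 + c2) : ℤ) * (2 * π) := by rw [hθ, hγ]; push_cast; ring
  have hd2 : θ + γ = 0 + ((c1 - c2 : ℤ)) * (2 * π) := by rw [hθ, hγ]; push_cast; ring
  have hc1 : Real.cos (θ - γ) = -1 := by
    rw [hd1, Real.cos_add_int_mul_two_pi, Real.cos_neg, Real.cos_pi]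
  have hs1' : Real.sin (θ - γ) = 0 := by
    rw [hd1, Real.sin_add_int_mul_two_pi, Real.sin_neg, Real.sin_pi, neg_zero]
  have hc2 : Real.cos (θ + γ) = 1 := by
    rw [hd2, Real.cos_add_int_mul_two_pi, Real.cos_zero]
  have hs2' : Real.sin (θ + γ) = 0 := by
    rw [hd2, Real.sin_add_int_mul_two_pi, Real.sin_zero]
  have hez1re : (Complex.exp z1).re = -n := by
    rw [Complex.exp_re, hz1re, hz1im, hexpal, hc1]; ring
  have hez1im : (Complex.exp z1).im = 0 := by
    rw [Complex.exp_im, hz1re, hz1im, hs1', mul_zero]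
  have hez2re : (Complex.exp z2).re = n := by
    rw [Complex.exp_re, hz2re, hz2im, hexpal, hc2]; ring
  have hez2im : (Complex.exp z2).im = 0 := by
    rw [Complex.exp_im, hz2re, hz2im, hs2', mul_zero]
  rw [hexpA, hez1re, hez1im, hez2re, hez2im, hvaw, hp, hq]
  match_scalars <;> ring
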